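/- For all β ∈ (−1, 1] and all real a > 0, b > 0, c, d, f, at least one of the two 2×2 submatrices Ric_{1,2} and Ric_{1,3} of Ric(β,a,b,c,d,f) is negative definite; consequently, the symmetric matrix Ric(β,a,b,c,d,f) has at least two negative eigenvalues counted with multiplicity. -/

import Mathlib

open Matrix Polynomial

set_option maxHeartbeats 2000000

noncomputable section

/-- The matrix `Ric(β,a,b,c,d,f)` of the Ricci operator of `A_{4,9}^β` in the
orthonormal basis of Lemma 1, where `l = 2a(1+β)` and
`r = 4a²(β²+β+1) + c² + d² + f²(1-β)²`. -/
def Ric (β a b c d f : ℝ) : Matrix (Fin 4) (Fin 4) ℝ :=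
  (1/2 : ℝ) •
    !![b^2 + c^2 + d^2 - 4*a^2*(1+β)^2,
         -a*c*β + d*f*(1-β) - c*(2*a*(1+β)),
         -d*(a + 2*a*(1+β)),
         0;
       -a*c*β + d*f*(1-β) - c*(2*a*(1+β)),
         -2*a*(2*a*(1+β)) - b^2 - c^2 + f^2*(1-β)^2,
         -c*d - a*f*(1-β)^2 - f*(2*a*(1+β))*(1-β),
         b*d;
       -d*(a + 2*a*(1+β)),
         -c*d - a*f*(1-β)^2 - f*(2*a*(1+β))*(1-β),
         -4*a^2*β*(1+β) - b^2 - d^2 - f^2*(1-β)^2,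
         -b*c;
       0,
         b*d,
         -b*c,
         -(4*a^2*(β^2+β+1) + c^2 + d^2 + f^2*(1-β)^2)]

lemma posDef_fin_two (p q t : ℝ) (hp : 0 < p) (hdet : 0 < p * t - q * q) :
    (!![p, q; q, t]).PosDef := by
  rw [Matrix.posDef_iff_dotProduct_mulVec]
  constructor
  · ext i j
    fin_cases i <;> fin_cases j <;> simp [Matrix.conjTranspose_apply]
  · intro x hx
    have hx' : x 0 ≠ 0 ∨ x 1 ≠ 0 := by
      by_contra h
      push_neg at h
      exact hx (funext fun i => by fin_cases i <;> simp [h.1, h.2])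
    have hval : dotProduct (star x) (!![p, q; q, t] *ᵥ x)
        = p * x 0 ^ 2 + 2 * q * x 0 * x 1 + t * x 1 ^ 2 := by
      simp [dotProduct, Matrix.mulVec, Fin.sum_univ_two]
      ring
    rw [hval]
    rcases hx' with h | h
    · rcases eq_or_ne (x 1) 0 with h1 | h1
      · rw [h1]
        have := mul_pos hp (mul_pos (abs_pos.2 h) (abs_pos.2 h))
        nlinarith [sq_abs (x 0)]
      · nlinarith [sq_nonneg (p * x 0 + q * x 1), mul_pos hdet (mul_pos (abs_pos.2 h1) (abs_pos.2 h1)), sq_abs (x 1)]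
    · nlinarith [sq_nonneg (p * x 0 + q * x 1), mul_pos hdet (mul_pos (abs_pos.2 h) (abs_pos.2 h)), sq_abs (x 1)]

lemma charpoly_conj {n : Type*} [DecidableEq n] [Fintype n] (U D V : Matrix n n ℝ)
    (hUV : U * V = 1) : (U * D * V).charpoly = D.charpoly := by
  have hmap : charmatrix (U * D * V) =
      U.map C * charmatrix D * V.map C := by
    unfold charmatrix
    rw [Matrix.mul_sub, Matrix.sub_mul]
    congr 1
    · rw [scalar_apply, ← Matrix.smul_one_eq_diagonal, mul_smul_comm, smul_mul_assoc,
        mul_one, ← Matrix.map_mul, hUV, Matrix.map_one C (map_zero C) (map_one C)]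
    · simp only [RingHom.mapMatrix_apply, Matrix.map_mul]
  have hdet1 : (U.map (C : ℝ →+* ℝ[X])).det * (V.map C).det = 1 := by
    rw [← det_mul, ← Matrix.map_mul, hUV, Matrix.map_one C (map_zero C) (map_one C), det_one]
  unfold Matrix.charpoly
  rw [hmap, det_mul, det_mul]
  calc (U.map C).det * (charmatrix D).det * (V.map C).det
      = (U.map C).det * (V.map C).det * (charmatrix D).det := by ring
    _ = (charmatrix D).det := by rw [hdet1, one_mul]

lemma charpoly_diag (d : Fin 4 → ℝ) : (diagonal d).charpoly = ∏ i, (X - C (d i)) := by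
  rw [Matrix.charpoly_of_upperTriangular _ (Matrix.blockTriangular_diagonal d)]
  simp

/-- For `β ∈ (-1,1]`, `a > 0`, `b > 0` and all reals `c, d, f`,
at least one of the 2×2 submatrices `Ric_{1,2}`, `Ric_{1,3}` of `Ric(β,a,b,c,d,f)`
is negative definite; consequently `Ric(β,a,b,c,d,f)` has at least two negative
eigenvalues counted with multiplicity. -/
theorem Ric_two_negative_eigenvalues (β a b c d f : ℝ) (hβ : -1 < β ∧ β ≤ 1)
    (ha : 0 < a) (hb : 0 < b) :
    ((-(Ric β a b c d f).submatrix ![2, 3] ![2, 3]).PosDef ∨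
      (-(Ric β a b c d f).submatrix ![1, 3] ![1, 3]).PosDef) ∧
    ∃ μ : Fin 4 → ℝ, Monotone μ ∧
      (Ric β a b c d f).charpoly = ∏ i, (X - C (μ i)) ∧ μ 0 < 0 ∧ μ 1 < 0 := by
  obtain ⟨hβ1, hβ2⟩ := hβ
  have ha2 : (0:ℝ) < a^2 := pow_pos ha 2
  have hb2 : (0:ℝ) < b^2 := pow_pos hb 2
  have hrc : (0:ℝ) < 4*a^2*(β^2+β+1) + d^2 + f^2*(1-β)^2 := by
    nlinarith [sq_nonneg (2*β+1), sq_nonneg d, sq_nonneg (f*(1-β)), mul_pos ha2 (show (0:ℝ) < β^2+β+1 by nlinarith [sq_nonneg (2*β+1)])]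
  have hrd : (0:ℝ) < 4*a^2*(β^2+β+1) + c^2 + f^2*(1-β)^2 := by
    nlinarith [sq_nonneg c, sq_nonneg (f*(1-β)), mul_pos ha2 (show (0:ℝ) < β^2+β+1 by nlinarith [sq_nonneg (2*β+1)])]
  have hr : (0:ℝ) < 4*a^2*(β^2+β+1) + c^2 + d^2 + f^2*(1-β)^2 := by nlinarith [sq_nonneg c]
  -- Part 1 : one of the two submatrices is (neg) definite
  have hpos : ((-(Ric β a b c d f).submatrix ![2, 3] ![2, 3]).PosDef ∨
      (-(Ric β a b c d f).submatrix ![1, 3] ![1, 3]).PosDef) := by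
    by_cases hg : 0 ≤ 4*a^2*(β^2+β) + d^2 + f^2*(1-β)^2
    · left
      have hEq : -(Ric β a b c d f).submatrix ![2, 3] ![2, 3] =
          !![(4*a^2*β*(1+β) + b^2 + d^2 + f^2*(1-β)^2)/2, (b*c)/2;
             (b*c)/2, (4*a^2*(β^2+β+1) + c^2 + d^2 + f^2*(1-β)^2)/2] := by
        ext i j
        fin_cases i <;> fin_cases j <;> simp only [Matrix.neg_apply, Matrix.submatrix_apply] <;> simp [Ric] <;> ring
      rw [hEq]
      apply posDef_fin_two
      · nlinarith []
      · nlinarith [mul_nonneg hg hr.le, mul_pos hb2 hrc]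
    · right
      push_neg at hg
      have hEq : -(Ric β a b c d f).submatrix ![1, 3] ![1, 3] =
          !![(4*a^2*(1+β) + b^2 + c^2 - f^2*(1-β)^2)/2, -((b*d)/2);
             -((b*d)/2), (4*a^2*(β^2+β+1) + c^2 + d^2 + f^2*(1-β)^2)/2] := by
        ext i j
        fin_cases i <;> fin_cases j <;> simp only [Matrix.neg_apply, Matrix.submatrix_apply] <;> simp [Ric] <;> ring
      rw [hEq]
      have hB : (0:ℝ) < 4*a^2*(1+β) + c^2 - f^2*(1-β)^2 := by
        nlinarith [mul_nonneg ha2.le (sq_nonneg (1+β)), sq_nonneg d, sq_nonneg c]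
      apply posDef_fin_two
      · nlinarith []
      · nlinarith [mul_pos hB hr, mul_pos hb2 hrd]
  refine ⟨hpos, ?_⟩
  -- Part 2 : eigenvalues
  have hA : (Ric β a b c d f).IsHermitian := by
    unfold Matrix.IsHermitian
    ext i j
    fin_cases i <;> fin_cases j <;> simp [Ric, Matrix.conjTranspose_apply] <;> ring
  set ev : Fin 4 → ℝ := hA.eigenvalues with hev
  set U : Matrix (Fin 4) (Fin 4) ℝ := (hA.eigenvectorUnitary : Matrix (Fin 4) (Fin 4) ℝ) with hU
  have hUmem := hA.eigenvectorUnitary.2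
  have hU1 : U * star U = 1 := (Matrix.mem_unitaryGroup_iff).mp hUmem
  have hU2 : star U * U = 1 := (Matrix.mem_unitaryGroup_iff').mp hUmem
  have hsp : Ric β a b c d f = U * diagonal ev * star U := by
    have h := hA.spectral_theorem
    rwa [RCLike.ofReal_real_eq_id, Function.id_comp] at h
  have hcp : (Ric β a b c d f).charpoly = ∏ i, (X - C (ev i)) := by
    rw [hsp, charpoly_conj _ _ _ hU1, charpoly_diag]
  set σ : Equiv.Perm (Fin 4) := Tuple.sort ev with hσ
  have hmono : Monotone (ev ∘ σ) := Tuple.monotone_sort ev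
  -- quadratic form identity
  have hquad : ∀ x : Fin 4 → ℝ,
      dotProduct x ((Ric β a b c d f) *ᵥ x) = ∑ j, ev j * (vecMul x U j)^2 := by
    intro x
    rw [hsp, ← mulVec_mulVec, ← mulVec_mulVec, dotProduct_mulVec,
      Matrix.star_eq_conjTranspose, conjTranspose_eq_transpose_of_trivial, mulVec_transpose]
    simp [dotProduct, mulVec_diagonal]
    exact Finset.sum_congr rfl fun j _ => by ring
  have hμ1 : ev (σ 1) < 0 := by
    by_contra hcon
    push_neg at hcon
    have hnn : ∀ j, j ≠ σ 0 → 0 ≤ ev j := by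
      intro j hj
      obtain ⟨i, rfl⟩ := σ.surjective j
      have hi : (1 : Fin 4) ≤ i := by
        rcases Fin.eq_zero_or_eq_succ i with rfl | ⟨i', rfl⟩
        · exact absurd rfl hj
        · exact Fin.succ_pos i'
      exact le_trans hcon (hmono hi)
    rcases hpos with hP | hP
    · -- indices 2, 3
      obtain ⟨s, t, hst, hort⟩ : ∃ s t : ℝ, ¬(s = 0 ∧ t = 0) ∧
          s * U 2 (σ 0) + t * U 3 (σ 0) = 0 := by
        by_cases h0 : U 2 (σ 0) = 0 ∧ U 3 (σ 0) = 0
        · exact ⟨1, 0, by simp, by simp [h0.1, h0.2]⟩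
        · refine ⟨U 3 (σ 0), -(U 2 (σ 0)), fun hc => h0 ⟨hc.2 ▸ (neg_eq_zero.mp hc.2), hc.1⟩, by ring⟩
      have hvne : (![s, t] : Fin 2 → ℝ) ≠ 0 := by
        intro h
        exact hst ⟨by simpa using congrFun h 0, by simpa using congrFun h 1⟩
      have hneg : dotProduct ![0,0,s,t] ((Ric β a b c d f) *ᵥ ![0,0,s,t]) < 0 := by
        have h2 := hP.dotProduct_mulVec_pos (x := ![s, t]) hvne
        have hsub : dotProduct (star ![s,t]) ((-(Ric β a b c d f).submatrix ![2, 3] ![2, 3]) *ᵥ ![s,t])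
            = -(dotProduct ![0,0,s,t] ((Ric β a b c d f) *ᵥ ![0,0,s,t])) := by
          simp only [Matrix.neg_mulVec]
          simp [dotProduct, Matrix.mulVec, Fin.sum_univ_two, Fin.sum_univ_four, Ric]
          ring
        rw [hsub] at h2
        linarith
      have hnonneg : 0 ≤ dotProduct ![0,0,s,t] ((Ric β a b c d f) *ᵥ ![0,0,s,t]) := by
        rw [hquad]
        apply Finset.sum_nonneg
        intro j _
        rcases eq_or_ne j (σ 0) with heq | hj
        · have hy : vecMul ![0,0,s,t] U (σ 0) = 0 := by
            simp [vecMul, dotProduct, Fin.sum_univ_four]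
            linear_combination hort
          rw [heq, hy]
          simp
        · exact mul_nonneg (hnn j hj) (sq_nonneg _)
      linarith
    · -- indices 1, 3
      obtain ⟨s, t, hst, hort⟩ : ∃ s t : ℝ, ¬(s = 0 ∧ t = 0) ∧
          s * U 1 (σ 0) + t * U 3 (σ 0) = 0 := by
        by_cases h0 : U 1 (σ 0) = 0 ∧ U 3 (σ 0) = 0
        · exact ⟨1, 0, by simp, by simp [h0.1, h0.2]⟩
        · refine ⟨U 3 (σ 0), -(U 1 (σ 0)), fun hc => h0 ⟨hc.2 ▸ (neg_eq_zero.mp hc.2), hc.1⟩, by ring⟩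
      have hvne : (![s, t] : Fin 2 → ℝ) ≠ 0 := by
        intro h
        exact hst ⟨by simpa using congrFun h 0, by simpa using congrFun h 1⟩
      have hneg : dotProduct ![0,s,0,t] ((Ric β a b c d f) *ᵥ ![0,s,0,t]) < 0 := by
        have h2 := hP.dotProduct_mulVec_pos (x := ![s, t]) hvne
        have hsub : dotProduct (star ![s,t]) ((-(Ric β a b c d f).submatrix ![1, 3] ![1, 3]) *ᵥ ![s,t])
            = -(dotProduct ![0,s,0,t] ((Ric β a b c d f) *ᵥ ![0,s,0,t])) := by
          simp only [Matrix.neg_mulVec]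
          simp [dotProduct, Matrix.mulVec, Fin.sum_univ_two, Fin.sum_univ_four, Ric]
          ring
        rw [hsub] at h2
        linarith
      have hnonneg : 0 ≤ dotProduct ![0,s,0,t] ((Ric β a b c d f) *ᵥ ![0,s,0,t]) := by
        rw [hquad]
        apply Finset.sum_nonneg
        intro j _
        rcases eq_or_ne j (σ 0) with heq | hj
        · have hy : vecMul ![0,s,0,t] U (σ 0) = 0 := by
            simp [vecMul, dotProduct, Fin.sum_univ_four]
            linear_combination hort
          rw [heq, hy]
          simp
        · exact mul_nonneg (hnn j hj) (sq_nonneg _)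
      linarith
  refine ⟨ev ∘ σ, hmono, ?_, ?_, hμ1⟩
  · rw [hcp, ← Equiv.prod_comp σ (fun i => X - C (ev i))]
    rfl
  · exact lt_of_le_of_lt (hmono (show (0:Fin 4) ≤ 1 by decide)) hμ1
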